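/- arXiv:0909.0071 — 2 statements merged into one kernel-verified Lean document; each statement's English description precedes it below -/
import Mathlib

section
/- Let L be a triangulation of S² and let C be a set of three vertices of L that are pairwise joined by edges of L, such that C does not span a 2-simplex of L and C is not the vertex set of the link of any vertex of L. Then the set of vertices of L not in C can be partitioned into two sets V₁ and V₂, each containing at least two vertices, such that no edge of L has one endpoint in V₁ and the other in V₂. -/
open Finset

/-- A combinatorial triangulation of the 2-sphere: a finite simplicial complex all of
whose maximal simplices are 2-simplices (triangles), such that every edge is contained
in exactly two 2-simplices, the link of every vertex is connected, the complex is
connected, and the Euler characteristic is `2`.  By the classification of closed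
surfaces, these conditions hold precisely when the geometric realization of the
complex is homeomorphic to `S²`.  The complex is recorded by its set of 2-simplices
(`faces`); its simplices are the vertices, the edges (2-element subsets of faces) and
the faces. -/
structure S2Triangulation (V : Type) [Fintype V] [DecidableEq V] : Type where
  /-- The 2-simplices. -/
  faces : Finset (Finset V)
  card_eq_three : ∀ f ∈ faces, f.card = 3
  /-- Every vertex lies in some 2-simplex. -/
  vertex_mem : ∀ v : V, ∃ f ∈ faces, v ∈ f
  /-- Every edge lies in exactly two 2-simplices. -/
  edge_two_faces : ∀ e : Finset V, e.card = 2 → (∃ f ∈ faces, e ⊆ f) →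
    (faces.filter fun f => e ⊆ f).card = 2
  /-- The link of every vertex is connected (so, with the other axioms, a cycle). -/
  link_connected : ∀ s u w : V,
    (s ≠ u ∧ ∃ f ∈ faces, s ∈ f ∧ u ∈ f) →
    (s ≠ w ∧ ∃ f ∈ faces, s ∈ f ∧ w ∈ f) →
    Relation.ReflTransGen (fun a b : V => a ≠ b ∧ ({s, a, b} : Finset V) ∈ faces) u w
  /-- The complex is connected. -/
  conn : ∀ u w : V,
    Relation.ReflTransGen (fun a b : V => a ≠ b ∧ ∃ f ∈ faces, a ∈ f ∧ b ∈ f) u w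
  /-- Euler characteristic 2:  #vertices - #edges + #faces = 2. -/
  euler : Fintype.card V + faces.card
      = (Finset.univ.filter fun e : Finset V => e.card = 2 ∧ ∃ f ∈ faces, e ⊆ f).card + 2

namespace S2Triangulation

variable {V : Type} [Fintype V] [DecidableEq V]

/-- Two vertices are adjacent (joined by an edge of `L`) if they are distinct and lie
in a common 2-simplex. -/
def Adj (L : S2Triangulation V) (u w : V) : Prop :=
  u ≠ w ∧ ∃ f ∈ L.faces, u ∈ f ∧ w ∈ f

instance (L : S2Triangulation V) (u w : V) : Decidable (L.Adj u w) :=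
  inferInstanceAs (Decidable (u ≠ w ∧ ∃ f ∈ L.faces, u ∈ f ∧ w ∈ f))

/-- The vertex set of the link of a vertex `s`. -/
def linkVerts (L : S2Triangulation V) (s : V) : Finset V :=
  Finset.univ.filter fun u => L.Adj s u

/-- An edge labeling of `L`: an assignment of an integer `m u w = m w u ≥ 2` to each
edge `{u, w}` of `L`. -/
structure EdgeLabeling (L : S2Triangulation V) : Type where
  m : V → V → ℕ
  symm : ∀ u w : V, m u w = m w u
  two_le : ∀ u w : V, L.Adj u w → 2 ≤ m u w

/-- The labeled complex is metric flag: three pairwise adjacent (distinct) vertices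
span a 2-simplex if and only if the sum of the reciprocals of the three labels
exceeds `1`. -/
def MetricFlag (L : S2Triangulation V) (M : EdgeLabeling L) : Prop :=
  ∀ s t u : V, L.Adj s t → L.Adj t u → L.Adj u s →
    (({s, t, u} : Finset V) ∈ L.faces ↔
      1 < (M.m s t : ℚ)⁻¹ + (M.m t u : ℚ)⁻¹ + (M.m u s : ℚ)⁻¹)

/-- `s` is a 3-Euclidean vertex: it has valence 3 and its link is a 3-cycle
`s₀, s₁, s₂` with `1/m s₀ s₁ + 1/m s₁ s₂ + 1/m s₂ s₀ = 1`. -/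
def Is3Euclidean (L : S2Triangulation V) (M : EdgeLabeling L) (s : V) : Prop :=
  ∃ s0 s1 s2 : V, s0 ≠ s1 ∧ s1 ≠ s2 ∧ s0 ≠ s2 ∧
    L.linkVerts s = {s0, s1, s2} ∧
    ({s, s0, s1} : Finset V) ∈ L.faces ∧ ({s, s1, s2} : Finset V) ∈ L.faces ∧
    ({s, s2, s0} : Finset V) ∈ L.faces ∧
    (M.m s0 s1 : ℚ)⁻¹ + (M.m s1 s2 : ℚ)⁻¹ + (M.m s2 s0 : ℚ)⁻¹ = 1

/-- The link of `s` is the 4-cycle `s₀, s₁, s₂, s₃` and all four consecutive labels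
are `2`; i.e. `s` is 4-Euclidean with link 4-cycle `s₀, s₁, s₂, s₃`. -/
def Is4EuclideanCycle (L : S2Triangulation V) (M : EdgeLabeling L)
    (s s0 s1 s2 s3 : V) : Prop :=
  s0 ≠ s1 ∧ s0 ≠ s2 ∧ s0 ≠ s3 ∧ s1 ≠ s2 ∧ s1 ≠ s3 ∧ s2 ≠ s3 ∧
  L.linkVerts s = {s0, s1, s2, s3} ∧
  ({s, s0, s1} : Finset V) ∈ L.faces ∧ ({s, s1, s2} : Finset V) ∈ L.faces ∧
  ({s, s2, s3} : Finset V) ∈ L.faces ∧ ({s, s3, s0} : Finset V) ∈ L.faces ∧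
  ({s, s0, s2} : Finset V) ∉ L.faces ∧ ({s, s1, s3} : Finset V) ∉ L.faces ∧
  M.m s0 s1 = 2 ∧ M.m s1 s2 = 2 ∧ M.m s2 s3 = 2 ∧ M.m s3 s0 = 2

/-- `s` is a 4-Euclidean vertex: it has valence 4 and its link is a 4-cycle
`s₀, s₁, s₂, s₃` with `m sᵢ sᵢ₊₁ = 2` for `i = 0, 1, 2, 3` (mod 4). -/
def Is4Euclidean (L : S2Triangulation V) (M : EdgeLabeling L) (s : V) : Prop :=
  ∃ s0 s1 s2 s3 : V, Is4EuclideanCycle L M s s0 s1 s2 s3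

/-- A Euclidean vertex is one that is 3-Euclidean or 4-Euclidean. -/
def IsEuclidean (L : S2Triangulation V) (M : EdgeLabeling L) (s : V) : Prop :=
  Is3Euclidean L M s ∨ Is4Euclidean L M s

/-- `s₀, s₁, s₂, s₃` is an empty Euclidean 4-circuit: a 4-cycle in the 1-skeleton with
all four labels `2`, which is not the vertex set of the link of any vertex and is not
the boundary of the union of two 2-simplices of `L` sharing an edge. -/
def IsEmptyEuclidean4Circuit (L : S2Triangulation V) (M : EdgeLabeling L)
    (s0 s1 s2 s3 : V) : Prop :=
  s0 ≠ s1 ∧ s0 ≠ s2 ∧ s0 ≠ s3 ∧ s1 ≠ s2 ∧ s1 ≠ s3 ∧ s2 ≠ s3 ∧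
  L.Adj s0 s1 ∧ L.Adj s1 s2 ∧ L.Adj s2 s3 ∧ L.Adj s3 s0 ∧
  M.m s0 s1 = 2 ∧ M.m s1 s2 = 2 ∧ M.m s2 s3 = 2 ∧ M.m s3 s0 = 2 ∧
  (∀ x : V, L.linkVerts x ≠ {s0, s1, s2, s3}) ∧
  ¬ ((({s0, s1, s2} : Finset V) ∈ L.faces ∧ ({s0, s2, s3} : Finset V) ∈ L.faces) ∨
     (({s1, s2, s3} : Finset V) ∈ L.faces ∧ ({s1, s3, s0} : Finset V) ∈ L.faces))

/-- `L` is the suspension of the `n`-gon `c₀, …, c_{n-1}` with suspension points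
`p, q`: the vertex set of `L` is `{p, q, c₀, …, c_{n-1}}` (all distinct), `p` and `q`
are not joined by an edge, `c₀, …, c_{n-1}` is an `n`-cycle in the 1-skeleton, and
the 2-simplices of `L` are exactly the sets `{p, cᵢ, cᵢ₊₁}` and `{q, cᵢ, cᵢ₊₁}`
for `i` mod `n`. -/
def IsSuspensionCycle (L : S2Triangulation V) {n : ℕ} (p q : V) (c : ZMod n → V) :
    Prop :=
  p ≠ q ∧ Function.Injective c ∧ (∀ i, p ≠ c i) ∧ (∀ i, q ≠ c i) ∧
  (∀ v : V, v = p ∨ v = q ∨ ∃ i, v = c i) ∧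
  ¬ L.Adj p q ∧ (∀ i, L.Adj (c i) (c (i + 1))) ∧
  (∀ f : Finset V, f ∈ L.faces ↔
    ∃ i, f = {p, c i, c (i + 1)} ∨ f = {q, c i, c (i + 1)})

/-- `L` is the suspension of an `n`-gon. -/
def IsSuspensionOfNGon (L : S2Triangulation V) (n : ℕ) : Prop :=
  ∃ (p q : V) (c : ZMod n → V), IsSuspensionCycle L p q c

end S2Triangulation

/-!
Mod 2 homology. A 2-chain whose boundary vanishes on the edges at a vertex `v` is constant on
the faces at `v`, because the link of `v` is connected; with the connectivity of `L` this gives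
`dim ker ∂₂ ≤ 1`, while connectivity alone gives `dim im ∂₁ ≥ #V - 1`. Rank–nullity and the
Euler relation `#V - #E + #F = 2` then force `H₁(L; 𝔽₂) = 0`, so the cycle formed by the three
edges of `C` bounds a 2-chain `u`. Around every vertex off `C` the chain `u` is constant, and its
value splits the vertices off `C` into two classes with no edge between them. Both classes are
nonempty: `u ≠ 0` as `∂u ≠ 0`, `u ≠ 1` as `∂1 = 0`, and every face has a vertex off `C` since
`C` is not a face. Each class has a second vertex, since a vertex whose neighbours all lie in `C`
would have `C` as its link, and links have at least three vertices.
-/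

open Module

namespace S2Triangulation

variable {V : Type} [Fintype V] [DecidableEq V] (L : S2Triangulation V)

def edgeSet : Finset (Finset V) :=
  univ.filter fun e => e.card = 2 ∧ ∃ f ∈ L.faces, e ⊆ f

def edgesIn (s : Finset V) : L.edgeSet → ZMod 2 := fun e => if e.1 ⊆ s then 1 else 0

def boundary₂ : (L.faces → ZMod 2) →ₗ[ZMod 2] (L.edgeSet → ZMod 2) :=
  Fintype.linearCombination (ZMod 2) fun f => L.edgesIn f

def boundary₁ : (L.edgeSet → ZMod 2) →ₗ[ZMod 2] (V → ZMod 2) :=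
  Fintype.linearCombination (ZMod 2) fun e => ∑ v ∈ e.1, Pi.single v 1

variable {L}

instance : Std.Symm L.Adj :=
  ⟨fun _ _ ⟨hxy, f, hf, hx, hy⟩ => ⟨hxy.symm, f, hf, hy, hx⟩⟩

lemma pairwise_adj_of_mem_faces {f : Finset V} (hf : f ∈ L.faces) : (f : Set V).Pairwise L.Adj :=
  fun _ hx _ hy hxy => ⟨hxy, f, hf, hx, hy⟩

lemma pair_mem_edgeSet {x y : V} (h : L.Adj x y) : ({x, y} : Finset V) ∈ L.edgeSet := by
  obtain ⟨hxy, f, hf, hx, hy⟩ := h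
  exact mem_filter.2
    ⟨mem_univ _, card_pair hxy, f, hf, insert_subset hx (singleton_subset_iff.2 hy)⟩

lemma ne_of_insert_mem_faces {s a b : V} (h : ({s, a, b} : Finset V) ∈ L.faces) : s ≠ b := by
  rintro rfl
  have := L.card_eq_three _ h
  have := card_le_two (a := a) (b := s)
  simp_all

lemma exists_mem_faces_ne {e f : Finset V} (he : e.card = 2) (hf : f ∈ L.faces) (hef : e ⊆ f) :
    ∃ g ∈ L.faces, g ≠ f ∧ e ⊆ g := by
  obtain ⟨g, hg, hgf⟩ := exists_mem_ne (L.edge_two_faces e he ⟨f, hf, hef⟩ ▸ one_lt_two) f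
  exact ⟨g, (mem_filter.1 hg).1, hgf, (mem_filter.1 hg).2⟩

lemma card_faces_superset (e : L.edgeSet) : #{f : L.faces | e.1 ⊆ f.1} = 2 := by
  obtain ⟨-, he, hef⟩ := mem_filter.1 e.2
  rw [← L.edge_two_faces e he hef, ← card_map (Function.Embedding.subtype _)]
  congr 1
  ext f
  simp [and_comm]

lemma boundary₂_apply (u : L.faces → ZMod 2) (e : L.edgeSet) :
    L.boundary₂ u e = ∑ f with e.1 ⊆ f.1, u f := by
  simp [boundary₂, Fintype.linearCombination_apply, edgesIn, sum_filter]

lemma boundary₂_one : L.boundary₂ 1 = 0 := by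
  ext e
  simp only [boundary₂_apply, Pi.one_apply, Pi.zero_apply, sum_const, card_faces_superset]
  decide

lemma apply_eq_of_boundary₂_apply_eq_zero {u : L.faces → ZMod 2} {e : L.edgeSet}
    (hu : L.boundary₂ u e = 0) {f g : L.faces} (hf : e.1 ⊆ f.1) (hg : e.1 ⊆ g.1) :
    u f = u g := by
  obtain rfl | hfg := eq_or_ne f g
  · rfl
  have hfaces : ({f : L.faces | e.1 ⊆ f.1} : Finset _) = {f, g} :=
    (eq_of_subset_of_card_le (by simp [insert_subset_iff, hf, hg])
      (by rw [card_faces_superset, card_pair hfg])).symm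
  rw [boundary₂_apply, hfaces, sum_pair hfg] at hu
  exact CharTwo.add_eq_zero.1 hu

lemma apply_eq_of_mem_of_boundary₂_apply_eq_zero {u : L.faces → ZMod 2} {v : V}
    (hu : ∀ e : L.edgeSet, v ∈ e.1 → L.boundary₂ u e = 0) {f g : L.faces}
    (hf : v ∈ f.1) (hg : v ∈ g.1) : u f = u g := by
  have across {w : V} (hwv : w ≠ v) {p q : L.faces} (hvp : v ∈ p.1) (hwp : w ∈ p.1)
      (hvq : v ∈ q.1) (hwq : w ∈ q.1) : u p = u q :=
    apply_eq_of_boundary₂_apply_eq_zero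
      (hu ⟨_, pair_mem_edgeSet ⟨hwv.symm, p, p.2, hvp, hwp⟩⟩ (mem_insert_self _ _))
      (insert_subset hvp (singleton_subset_iff.2 hwp))
      (insert_subset hvq (singleton_subset_iff.2 hwq))
  obtain ⟨x, hxf, hxv⟩ := exists_mem_ne (by rw [L.card_eq_three _ f.2]; norm_num) v
  obtain ⟨y, hyg, hyv⟩ := exists_mem_ne (by rw [L.card_eq_three _ g.2]; norm_num) v
  have key : ∀ z, Relation.ReflTransGen (fun a b => a ≠ b ∧ ({v, a, b} : Finset V) ∈ L.faces) x z →
      ∀ p : L.faces, v ∈ p.1 → z ∈ p.1 → u p = u f := by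
    intro z hz
    induction hz with
    | refl => exact fun p hvp hxp => across hxv hvp hxp hf hxf
    | @tail b z _ hbz ih =>
      intro p hvp hzp
      have hm : ({v, b, z} : Finset V) ∈ L.faces := hbz.2
      exact (across (ne_of_insert_mem_faces hm).symm hvp hzp (by simp) (by simp)).trans
        (ih ⟨_, hm⟩ (by simp) (by simp))
  exact (key y (L.link_connected v x y ⟨hxv.symm, f, f.2, hf, hxf⟩ ⟨hyv.symm, g, g.2, hg, hyg⟩)
    g hg hyg).symm

lemma apply_eq_of_boundary₂_eq_zero {u : L.faces → ZMod 2} (hu : L.boundary₂ u = 0)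
    (f g : L.faces) : u f = u g := by
  have star (v : V) {p q : L.faces} (hp : v ∈ p.1) (hq : v ∈ q.1) : u p = u q :=
    apply_eq_of_mem_of_boundary₂_apply_eq_zero (fun e _ => by rw [hu]; rfl) hp hq
  obtain ⟨v, hv⟩ := card_pos.1 (by rw [L.card_eq_three _ f.2]; norm_num : 0 < f.1.card)
  obtain ⟨w, hw⟩ := card_pos.1 (by rw [L.card_eq_three _ g.2]; norm_num : 0 < g.1.card)
  have key : ∀ z, Relation.ReflTransGen (fun a b => a ≠ b ∧ ∃ m ∈ L.faces, a ∈ m ∧ b ∈ m) v z →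
      ∀ p : L.faces, z ∈ p.1 → u p = u f := by
    intro z hz
    induction hz with
    | refl => exact fun p hp => star v hp hv
    | tail _ hbz ih =>
      obtain ⟨-, m, hm, hbm, hzm⟩ := hbz
      exact fun p hzp => (star _ hzp hzm).trans (ih ⟨m, hm⟩ hbm)
  exact (key w (L.conn v w) g hw).symm

variable (L) in
lemma finrank_ker_boundary₂_le_one : finrank (ZMod 2) (LinearMap.ker L.boundary₂) ≤ 1 := by
  have hle : LinearMap.ker L.boundary₂ ≤ Submodule.span (ZMod 2) {1} := by
    intro u hu
    obtain hempty | ⟨⟨f₀⟩⟩ := isEmpty_or_nonempty L.faces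
    · rw [Subsingleton.elim u 0]
      exact zero_mem _
    · rw [Submodule.mem_span_singleton]
      exact ⟨u f₀, funext fun f => by simp [apply_eq_of_boundary₂_eq_zero hu f f₀]⟩
  exact (Submodule.finrank_mono hle).trans ((finrank_span_le_card _).trans (by simp))

lemma boundary₁_single_pair {x y : V} (h : L.Adj x y) :
    L.boundary₁ (Pi.single ⟨{x, y}, pair_mem_edgeSet h⟩ 1) = Pi.single x 1 + Pi.single y 1 := by
  simp [boundary₁, Fintype.linearCombination_apply_single, sum_pair h.1]

variable (L) in
lemma single_add_single_mem_range_boundary₁ (x y : V) :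
    Pi.single x 1 + Pi.single y 1 ∈ LinearMap.range L.boundary₁ := by
  induction L.conn x y with
  | refl =>
    rw [show Pi.single x 1 + Pi.single x 1 = (0 : V → ZMod 2) from
      funext fun _ => CharTwo.add_self_eq_zero _]
    exact zero_mem _
  | @tail y z _ hyz ih =>
    rw [show Pi.single x 1 + Pi.single z 1 =
        (Pi.single x 1 + Pi.single y 1) + (Pi.single y 1 + Pi.single z (1 : ZMod 2)) from
      funext fun _ => by
        simp only [Pi.add_apply]
        rw [add_assoc, ← add_assoc (Pi.single y 1 _), CharTwo.add_self_eq_zero, zero_add]]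
    exact add_mem ih ⟨_, boundary₁_single_pair hyz⟩

variable (L) in
lemma card_le_finrank_range_boundary₁_add_one :
    Fintype.card V ≤ finrank (ZMod 2) (LinearMap.range L.boundary₁) + 1 := by
  obtain hV | ⟨⟨v₀⟩⟩ := isEmpty_or_nonempty V
  · simp
  set S := Submodule.span (ZMod 2) {(Pi.single v₀ 1 : V → ZMod 2)}
  have htop : LinearMap.range L.boundary₁ ⊔ S = ⊤ := by
    rw [eq_top_iff, ← (Pi.basisFun (ZMod 2) V).span_eq, Submodule.span_le]
    rintro _ ⟨v, rfl⟩
    rw [Pi.basisFun_apply, show Pi.single v 1 =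
        (Pi.single v 1 + Pi.single v₀ 1) + Pi.single v₀ (1 : ZMod 2) from
      funext fun _ => (CharTwo.add_cancel_right _ _).symm]
    exact add_mem (Submodule.mem_sup_left (L.single_add_single_mem_range_boundary₁ v v₀))
      (Submodule.mem_sup_right (Submodule.mem_span_singleton_self _))
  have hS : finrank (ZMod 2) S ≤ 1 := (finrank_span_le_card _).trans (by simp)
  have := Submodule.finrank_add_le_finrank_add_finrank (LinearMap.range L.boundary₁) S
  rw [htop, finrank_top, finrank_pi] at this
  omega

lemma filter_edgeSet_subset_eq_image {s : Finset V} (hs : (s : Set V).Pairwise L.Adj) {v : V}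
    (hv : v ∈ s) : {e ∈ L.edgeSet | e ⊆ s ∧ v ∈ e} = (s.erase v).image fun w => {w, v} := by
  ext e
  simp only [mem_filter, mem_image, mem_erase]
  constructor
  · rintro ⟨he, hes, hve⟩
    obtain ⟨w, hw⟩ := card_eq_one.1 (by rw [card_erase_of_mem hve, (mem_filter.1 he).2.1] :
      #(e.erase v) = 1)
    have hwe : w ∈ e.erase v := hw ▸ mem_singleton_self w
    refine ⟨w, ⟨ne_of_mem_erase hwe, hes (mem_of_mem_erase hwe)⟩, ?_⟩
    rw [pair_comm, ← hw, insert_erase hve]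
  · rintro ⟨w, ⟨hwv, hws⟩, rfl⟩
    exact ⟨pair_mem_edgeSet (hs hws hv hwv), insert_subset hws (singleton_subset_iff.2 hv),
      mem_insert_of_mem (mem_singleton_self v)⟩

lemma boundary₁_edgesIn {s : Finset V} (hs3 : s.card = 3) (hs : (s : Set V).Pairwise L.Adj) :
    L.boundary₁ (L.edgesIn s) = 0 := by
  ext v
  have hcount : L.boundary₁ (L.edgesIn s) v = #{e ∈ L.edgeSet | e ⊆ s ∧ v ∈ e} := by
    simp only [boundary₁, edgesIn, Fintype.linearCombination_apply, ite_smul, one_smul, zero_smul,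
      Finset.sum_apply, apply_ite (fun x : V → ZMod 2 => x v), Pi.single_apply, sum_ite_eq,
      Pi.zero_apply, ← ite_and]
    rw [sum_coe_sort L.edgeSet fun e => if e ⊆ s ∧ v ∈ e then (1 : ZMod 2) else 0, sum_boole]
  rw [hcount]
  by_cases hv : v ∈ s
  · rw [filter_edgeSet_subset_eq_image hs hv, card_image_of_injOn, card_erase_of_mem hv, hs3]
    · rfl
    · exact (insert_inj_on {v}).mono fun w hw => by simpa using ne_of_mem_erase hw
  · rw [filter_false_of_mem fun e _ h => hv (h.1 h.2)]
    rfl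

variable (L) in
lemma boundary₁_comp_boundary₂ : L.boundary₁ ∘ₗ L.boundary₂ = 0 := by
  refine LinearMap.ext fun u => ?_
  simp only [LinearMap.comp_apply, boundary₂, Fintype.linearCombination_apply, map_sum, map_smul,
    LinearMap.zero_apply]
  exact sum_eq_zero fun f _ => by
    rw [boundary₁_edgesIn (L.card_eq_three _ f.2) (pairwise_adj_of_mem_faces f.2), smul_zero]

variable (L) in
theorem ker_boundary₁_le_range_boundary₂ :
    LinearMap.ker L.boundary₁ ≤ LinearMap.range L.boundary₂ := by
  have h₁ := L.boundary₁.finrank_range_add_finrank_ker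
  have h₂ := L.boundary₂.finrank_range_add_finrank_ker
  simp only [finrank_pi, Fintype.card_coe] at h₁ h₂
  have := L.finrank_ker_boundary₂_le_one
  have := L.card_le_finrank_range_boundary₁_add_one
  have : Fintype.card V + #L.faces = #L.edgeSet + 2 := L.euler
  exact (Submodule.eq_of_le_of_finrank_le
    (LinearMap.range_le_ker_iff.2 L.boundary₁_comp_boundary₂) (by omega)).ge

variable (L) in
lemma three_le_card_linkVerts (x : V) : 3 ≤ #(L.linkVerts x) := by
  obtain ⟨f, hf, hxf⟩ := L.vertex_mem x
  have hf3 := L.card_eq_three f hf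
  obtain ⟨p, hpf, hpx⟩ := exists_mem_ne (by omega : 1 < #f) x
  obtain ⟨g, hg, hgf, hxpg⟩ := exists_mem_faces_ne (card_pair hpx.symm) hf
    (insert_subset hxf (singleton_subset_iff.2 hpf))
  have hxg : x ∈ g := hxpg (mem_insert_self _ _)
  have hnsub : ¬ g.erase x ⊆ f.erase x := fun h => hgf <| by
    rw [← insert_erase hxf, ← insert_erase hxg, eq_of_subset_of_card_le h
      (by rw [card_erase_of_mem hxf, card_erase_of_mem hxg, hf3, L.card_eq_three g hg])]
  have hlink : f.erase x ∪ g.erase x ⊆ L.linkVerts x := by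
    intro y hy
    simp only [linkVerts, mem_filter, mem_univ, true_and]
    rcases mem_union.1 hy with hy | hy
    · exact ⟨(ne_of_mem_erase hy).symm, f, hf, hxf, mem_of_mem_erase hy⟩
    · exact ⟨(ne_of_mem_erase hy).symm, g, hg, hxg, mem_of_mem_erase hy⟩
  calc 3 = #(f.erase x) + 1 := by rw [card_erase_of_mem hxf, hf3]
    _ ≤ #(f.erase x ∪ g.erase x) := card_lt_card (left_lt_sup.2 hnsub)
    _ ≤ _ := card_le_card hlink

lemma exists_adj_notMem_of_linkVerts_ne {C : Finset V} (hC : #C ≤ 3) {x : V}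
    (hx : L.linkVerts x ≠ C) : ∃ y, L.Adj x y ∧ y ∉ C := by
  by_contra! h
  exact hx (eq_of_subset_of_card_le (fun y hy => h y (mem_filter.1 hy).2)
    (hC.trans (L.three_le_card_linkVerts x)))

lemma two_le_card_of_adj_closed {C S : Finset V} (hC : #C ≤ 3) (hnl : ∀ x, L.linkVerts x ≠ C)
    (hS : ∀ x ∈ S, ∀ y, L.Adj x y → y ∉ C → y ∈ S) {x : V} (hx : x ∈ S) : 2 ≤ #S := by
  obtain ⟨y, hxy, hy⟩ := exists_adj_notMem_of_linkVerts_ne hC (hnl x)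
  exact one_lt_card.2 ⟨x, hx, y, hS x hx y hxy hy, hxy.1⟩

lemma not_subset_of_notMem_faces {C f : Finset V} (hC : #C ≤ 3) (hCf : C ∉ L.faces)
    (hf : f ∈ L.faces) : ¬ f ⊆ C :=
  fun h => hCf (eq_of_subset_of_card_le h (hC.trans (L.card_eq_three f hf).ge) ▸ hf)

section Separation

variable {C : Finset V} {u : L.faces → ZMod 2}

variable (L) in
def side (C : Finset V) (u : L.faces → ZMod 2) : Finset V :=
  (univ \ C).filter fun v => ∃ f : L.faces, v ∈ f.1 ∧ u f = 1

lemma mem_side_iff (hu : ∀ e : L.edgeSet, ¬ e.1 ⊆ C → L.boundary₂ u e = 0) {v : V} (hv : v ∉ C)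
    {f : L.faces} (hvf : v ∈ f.1) : v ∈ L.side C u ↔ u f = 1 := by
  have star (g : L.faces) (hvg : v ∈ g.1) : u g = u f :=
    apply_eq_of_mem_of_boundary₂_apply_eq_zero (fun e hve => hu e fun h => hv (h hve)) hvg hvf
  simp only [side, mem_filter, mem_sdiff, mem_univ, true_and, hv, not_false_eq_true]
  exact ⟨fun ⟨g, hvg, hg⟩ => star g hvg ▸ hg, fun h => ⟨f, hvf, h⟩⟩

lemma mem_side_iff_of_adj (hu : ∀ e : L.edgeSet, ¬ e.1 ⊆ C → L.boundary₂ u e = 0) {x y : V}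
    (hx : x ∉ C) (hy : y ∉ C) (h : L.Adj x y) : x ∈ L.side C u ↔ y ∈ L.side C u := by
  obtain ⟨-, m, hm, hxm, hym⟩ := h
  rw [mem_side_iff hu hx (f := ⟨m, hm⟩) hxm, mem_side_iff hu hy (f := ⟨m, hm⟩) hym]

theorem exists_separation_of_boundary₂ (hC : #C ≤ 3) (hCf : C ∉ L.faces)
    (hnl : ∀ x, L.linkVerts x ≠ C) (hu : ∀ e : L.edgeSet, ¬ e.1 ⊆ C → L.boundary₂ u e = 0)
    (hu0 : u ≠ 0) (hu1 : u ≠ 1) :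
    ∃ V1 V2 : Finset V, V1 ∪ V2 = univ \ C ∧ V1 ∩ V2 = ∅ ∧ 2 ≤ #V1 ∧ 2 ≤ #V2 ∧
      ∀ x ∈ V1, ∀ y ∈ V2, ¬ L.Adj x y := by
  set V1 := L.side C u
  set V2 := (univ \ C) \ V1
  have hV1C : V1 ⊆ univ \ C := filter_subset _ _
  have off {x : V} (hx : x ∈ univ \ C) : x ∉ C := (mem_sdiff.1 hx).2
  have hV1 : ∀ x ∈ V1, ∀ y, L.Adj x y → y ∉ C → y ∈ V1 := fun x hx y hxy hy =>
    (mem_side_iff_of_adj hu (off (hV1C hx)) hy hxy).1 hx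
  have hV2 : ∀ x ∈ V2, ∀ y, L.Adj x y → y ∉ C → y ∈ V2 := fun x hx y hxy hy =>
    mem_sdiff.2 ⟨by simpa using hy, fun h =>
      (mem_sdiff.1 hx).2 ((mem_side_iff_of_adj hu (off (mem_sdiff.1 hx).1) hy hxy).2 h)⟩
  obtain ⟨f₁, hf₁⟩ := Function.ne_iff.1 hu0
  obtain ⟨f₀, hf₀⟩ := Function.ne_iff.1 hu1
  obtain ⟨v₁, hv₁f, hv₁C⟩ := not_subset.1 (not_subset_of_notMem_faces hC hCf f₁.2)
  obtain ⟨v₀, hv₀f, hv₀C⟩ := not_subset.1 (not_subset_of_notMem_faces hC hCf f₀.2)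
  refine ⟨V1, V2, union_sdiff_of_subset hV1C, inter_sdiff_self _ _,
    two_le_card_of_adj_closed hC hnl hV1
      ((mem_side_iff hu hv₁C hv₁f).2 (Fin.eq_one_of_ne_zero _ hf₁)),
    two_le_card_of_adj_closed hC hnl hV2
      (mem_sdiff.2 ⟨by simpa using hv₀C, (mem_side_iff hu hv₀C hv₀f).not.2 hf₀⟩),
    fun x hx y hy hxy => (mem_sdiff.1 hy).2 (hV1 x hx y hxy (off (mem_sdiff.1 hy).1))⟩

end Separation

end S2Triangulation

open S2Triangulation in
/-- Let `L` be a triangulation of `S²` and let `C = {a, b, c}` be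
a set of three vertices of `L` that are pairwise joined by edges of `L`, such that
`C` does not span a 2-simplex of `L` and `C` is not the vertex set of the link of
any vertex of `L`.  Then the vertices of `L` not in `C` can be partitioned into two
sets `V₁` and `V₂`, each with at least two elements, such that no edge of `L` joins
a vertex of `V₁` to a vertex of `V₂`. -/
theorem empty_three_circuit_separates {V : Type} [Fintype V] [DecidableEq V]
    (L : S2Triangulation V) (a b c : V)
    (hab : L.Adj a b) (hbc : L.Adj b c) (hac : L.Adj a c)
    (hnf : ({a, b, c} : Finset V) ∉ L.faces)
    (hnl : ∀ x : V, L.linkVerts x ≠ {a, b, c}) :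
    ∃ V1 V2 : Finset V,
      V1 ∪ V2 = Finset.univ \ {a, b, c} ∧ V1 ∩ V2 = ∅ ∧
      2 ≤ V1.card ∧ 2 ≤ V2.card ∧
      ∀ u ∈ V1, ∀ w ∈ V2, ¬ L.Adj u w := by
  have hC : #({a, b, c} : Finset V) = 3 := card_eq_three.2 ⟨a, b, c, hab.1, hac.1, hbc.1, rfl⟩
  have hCadj : (({a, b, c} : Finset V) : Set V).Pairwise L.Adj := by
    simp [Set.pairwise_insert_of_symm, hab, hbc, hac]
  obtain ⟨u, hu⟩ := L.ker_boundary₁_le_range_boundary₂ (L.boundary₁_edgesIn hC hCadj)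
  have hcycle : L.edgesIn {a, b, c} ≠ 0 := fun h => by
    simpa [edgesIn] using congrFun h ⟨_, pair_mem_edgeSet hab⟩
  refine L.exists_separation_of_boundary₂ hC.le hnf hnl
    (fun e he => by rw [hu, edgesIn, if_neg he]) ?_ ?_
  · rintro rfl
    exact hcycle (by rw [← hu, map_zero])
  · rintro rfl
    exact hcycle (by rw [← hu, boundary₂_one])
end

section
/- Let L be a triangulation of S² and let s be a vertex of valence 3 whose link has vertices a, b, c. If {a,b,c} spans a 2-simplex of L, then L is the boundary of a 3-simplex: L has exactly the four vertices s, a, b, c, and the 2-simplices of L are exactly the four 3-element subsets of {s,a,b,c}. -/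
set_option maxHeartbeats 2000000


open Finset

section MyAux
variable {V : Type} [Fintype V] [DecidableEq V]

lemma my_aux_card4 {x y z w : V} (hxy : x ≠ y) (hxz : x ≠ z) (hxw : x ≠ w)
    (hyz : y ≠ z) (hyw : y ≠ w) (hzw : z ≠ w) :
    ({x, y, z, w} : Finset V).card = 4 := by
  rw [Finset.card_insert_of_notMem (by simp [hxy, hxz, hxw]),
    Finset.card_insert_of_notMem (by simp [hyz, hyw]),
    Finset.card_insert_of_notMem (by simp [hzw]), Finset.card_singleton]

lemma my_aux3of4 {x y z w : V} (hxy : x ≠ y) (hxz : x ≠ z) (hxw : x ≠ w)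
    (hyz : y ≠ z) (hyw : y ≠ w) (hzw : z ≠ w)
    (f : Finset V) (hsub : f ⊆ {x, y, z, w}) (hc : f.card = 3) :
    f = {x, y, z} ∨ f = {x, y, w} ∨ f = {x, z, w} ∨ f = {y, z, w} := by
  have h4 := my_aux_card4 hxy hxz hxw hyz hyw hzw
  have hne : f ≠ {x, y, z, w} := by
    intro h; rw [h, h4] at hc; omega
  obtain ⟨v, hv, hvf⟩ := Finset.exists_of_ssubset (hsub.ssubset_of_ne hne)
  have hsub' : f ⊆ ({x, y, z, w} : Finset V).erase v :=
    Finset.subset_erase.2 ⟨hsub, hvf⟩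
  have hcard' : (({x, y, z, w} : Finset V).erase v).card = 3 := by
    rw [Finset.card_erase_of_mem hv, h4]
  have hfv : f = ({x, y, z, w} : Finset V).erase v :=
    Finset.eq_of_subset_of_card_le hsub' (by omega)
  simp only [Finset.mem_insert, Finset.mem_singleton] at hv
  rcases hv with h | h | h | h
  · right; right; right
    rw [hfv, h, Finset.erase_insert (by simp [hxy, hxz, hxw])]
  · right; right; left
    rw [hfv, h, Finset.insert_comm x y, Finset.erase_insert (by simp [hxy.symm, hyz, hyw])]
  · right; left
    rw [hfv, h, Finset.insert_comm y z, Finset.insert_comm x z,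
      Finset.erase_insert (by simp [hxz.symm, hyz.symm, hzw])]
  · left
    rw [hfv, h, Finset.pair_comm z w, Finset.insert_comm y w, Finset.insert_comm x w,
      Finset.erase_insert (by simp [hxw.symm, hyw.symm, hzw.symm])]

open S2Triangulation in
lemma my_link_face_aux (L : S2Triangulation V) (s a b c : V)
    (hab : a ≠ b) (hbc : b ≠ c) (hac : a ≠ c)
    (hlink : L.linkVerts s = {a, b, c})
    (hf : ({a, b, c} : Finset V) ∈ L.faces) :
    (({s, a, b} : Finset V) ∈ L.faces ∧ ({s, a, c} : Finset V) ∈ L.faces ∧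
      ({s, b, c} : Finset V) ∈ L.faces) ∧
    (∀ f ∈ L.faces, (s ∈ f ∨ a ∈ f) →
      f = {s, a, b} ∨ f = {s, a, c} ∨ f = {s, b, c} ∨ f = {a, b, c}) := by
  have memLink : ∀ x, L.Adj s x ↔ x = a ∨ x = b ∨ x = c := by
    intro x
    constructor
    · intro hx
      have : x ∈ L.linkVerts s := by simp [S2Triangulation.linkVerts, hx]
      rw [hlink] at this; simpa using this
    · intro hx
      have : x ∈ L.linkVerts s := by rw [hlink]; simpa using hx
      simpa [S2Triangulation.linkVerts] using this
  have hsa : L.Adj s a := (memLink a).2 (Or.inl rfl)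
  have hsb : L.Adj s b := (memLink b).2 (Or.inr (Or.inl rfl))
  have hsc : L.Adj s c := (memLink c).2 (Or.inr (Or.inr rfl))
  have hsa' : s ≠ a := hsa.1
  have hsb' : s ≠ b := hsb.1
  have hsc' : s ≠ c := hsc.1
  have faceS : ∀ g ∈ L.faces, s ∈ g → g = {s, a, b} ∨ g = {s, a, c} ∨ g = {s, b, c} := by
    intro g hg hsg
    have hsub : g ⊆ {s, a, b, c} := by
      intro x hx
      by_cases hxs : x = s
      · simp [hxs]
      · have hadj : L.Adj s x := ⟨fun h => hxs h.symm, g, hg, hsg, hx⟩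
        rcases (memLink x).1 hadj with h | h | h <;> simp [h]
    rcases my_aux3of4 hsa' hsb' hsc' hab hac hbc g hsub (L.card_eq_three g hg)
      with h | h | h | h
    · exact Or.inl h
    · exact Or.inr (Or.inl h)
    · exact Or.inr (Or.inr h)
    · exfalso; rw [h] at hsg
      simp only [Finset.mem_insert, Finset.mem_singleton] at hsg
      tauto
  have edge2 : ∀ u v : V, L.Adj u v →
      (L.faces.filter fun g => ({u, v} : Finset V) ⊆ g).card = 2 := by
    intro u v huv
    obtain ⟨hne, g, hg, hug, hvg⟩ := huv
    exact L.edge_two_faces {u, v} (Finset.card_pair hne)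
      ⟨g, hg, by rw [Finset.insert_subset_iff]; exact ⟨hug, Finset.singleton_subset_iff.2 hvg⟩⟩
  have hadjab : L.Adj a b := ⟨hab, {a, b, c}, hf, by simp, by simp⟩
  have hadjac : L.Adj a c := ⟨hac, {a, b, c}, hf, by simp, by simp⟩
  -- the three faces through s
  have hSab : ({s, a, b} : Finset V) ∈ L.faces ∧ ({s, a, c} : Finset V) ∈ L.faces := by
    have hc2 := edge2 s a hsa
    have hsub : (L.faces.filter fun g => ({s, a} : Finset V) ⊆ g) ⊆ {{s, a, b}, {s, a, c}} := by
      intro g hg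
      rw [Finset.mem_filter] at hg
      obtain ⟨hg, he⟩ := hg
      have hsg : s ∈ g := he (by simp)
      have hag : a ∈ g := he (by simp)
      rcases faceS g hg hsg with h | h | h
      · simp [h]
      · simp [h]
      · exfalso; rw [h] at hag
        simp only [Finset.mem_insert, Finset.mem_singleton] at hag
        tauto
    have hne : ({s, a, b} : Finset V) ≠ {s, a, c} := by
      intro h
      have : b ∈ ({s, a, c} : Finset V) := by rw [← h]; simp
      simp only [Finset.mem_insert, Finset.mem_singleton] at this
      tauto
    have heq : (L.faces.filter fun g => ({s, a} : Finset V) ⊆ g) = {{s, a, b}, {s, a, c}} :=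
      Finset.eq_of_subset_of_card_le hsub (by rw [Finset.card_pair hne, hc2])
    constructor
    · have h1 : ({s, a, b} : Finset V) ∈ L.faces.filter fun g => ({s, a} : Finset V) ⊆ g := by
        rw [heq]; simp
      exact (Finset.mem_filter.1 h1).1
    · have h1 : ({s, a, c} : Finset V) ∈ L.faces.filter fun g => ({s, a} : Finset V) ⊆ g := by
        rw [heq]; simp
      exact (Finset.mem_filter.1 h1).1
  obtain ⟨hfab, hfac⟩ := hSab
  have hfbc : ({s, b, c} : Finset V) ∈ L.faces := by
    have hc2 := edge2 s b hsb
    have hsub : (L.faces.filter fun g => ({s, b} : Finset V) ⊆ g) ⊆ {{s, a, b}, {s, b, c}} := by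
      intro g hg
      rw [Finset.mem_filter] at hg
      obtain ⟨hg, he⟩ := hg
      have hsg : s ∈ g := he (by simp)
      have hbg : b ∈ g := he (by simp)
      rcases faceS g hg hsg with h | h | h
      · simp [h]
      · exfalso; rw [h] at hbg
        simp only [Finset.mem_insert, Finset.mem_singleton] at hbg
        tauto
      · simp [h]
    have hne : ({s, a, b} : Finset V) ≠ {s, b, c} := by
      intro h
      have : a ∈ ({s, b, c} : Finset V) := by rw [← h]; simp
      simp only [Finset.mem_insert, Finset.mem_singleton] at this
      tauto
    have heq : (L.faces.filter fun g => ({s, b} : Finset V) ⊆ g) = {{s, a, b}, {s, b, c}} :=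
      Finset.eq_of_subset_of_card_le hsub (by rw [Finset.card_pair hne, hc2])
    have h1 : ({s, b, c} : Finset V) ∈ L.faces.filter fun g => ({s, b} : Finset V) ⊆ g := by
      rw [heq]; simp
    exact (Finset.mem_filter.1 h1).1
  have edgeC : ∀ (u v : V) (p q : Finset V), L.Adj u v → p ∈ L.faces → q ∈ L.faces →
      p ≠ q → ({u, v} : Finset V) ⊆ p → ({u, v} : Finset V) ⊆ q →
      ∀ g ∈ L.faces, u ∈ g → v ∈ g → g = p ∨ g = q := by
    intro u v p q huv hp hq hpq hup huq g hg hu hv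
    have hc2 := edge2 u v huv
    have hsub : ({p, q} : Finset (Finset V)) ⊆ L.faces.filter fun g => ({u, v} : Finset V) ⊆ g := by
      intro r hr
      simp only [Finset.mem_insert, Finset.mem_singleton] at hr
      rcases hr with rfl | rfl <;> rw [Finset.mem_filter] <;> exact ⟨by assumption, by assumption⟩
    have heq : ({p, q} : Finset (Finset V)) = L.faces.filter fun g => ({u, v} : Finset V) ⊆ g :=
      Finset.eq_of_subset_of_card_le hsub (by rw [hc2, Finset.card_pair hpq])
    have hmem : g ∈ L.faces.filter fun g => ({u, v} : Finset V) ⊆ g := by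
      rw [Finset.mem_filter]
      exact ⟨hg, by rw [Finset.insert_subset_iff]; exact ⟨hu, Finset.singleton_subset_iff.2 hv⟩⟩
    rw [← heq] at hmem
    simpa using hmem
  have hne1 : ({s, a, b} : Finset V) ≠ {a, b, c} := by
    intro h
    have : s ∈ ({a, b, c} : Finset V) := by rw [← h]; simp
    simp only [Finset.mem_insert, Finset.mem_singleton] at this
    tauto
  have hne2 : ({s, a, c} : Finset V) ≠ {a, b, c} := by
    intro h
    have : s ∈ ({a, b, c} : Finset V) := by rw [← h]; simp
    simp only [Finset.mem_insert, Finset.mem_singleton] at this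
    tauto
  have edgeAB : ∀ g ∈ L.faces, a ∈ g → b ∈ g → g = {s, a, b} ∨ g = {a, b, c} :=
    edgeC a b {s, a, b} {a, b, c} hadjab hfab hf hne1
      (by rw [Finset.insert_subset_iff]; simp) (by rw [Finset.insert_subset_iff]; simp)
  have edgeAC : ∀ g ∈ L.faces, a ∈ g → c ∈ g → g = {s, a, c} ∨ g = {a, b, c} :=
    edgeC a c {s, a, c} {a, b, c} hadjac hfac hf hne2
      (by rw [Finset.insert_subset_iff]; simp) (by rw [Finset.insert_subset_iff]; simp)
  refine ⟨⟨hfab, hfac, hfbc⟩, ?_⟩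
  intro f hfF hsfOrA
  rcases hsfOrA with hs | haf
  · rcases faceS f hfF hs with h | h | h <;> tauto
  by_cases hs : s ∈ f
  · rcases faceS f hfF hs with h | h | h <;> tauto
  by_cases hbf : b ∈ f
  · rcases edgeAB f hfF haf hbf with h | h <;> tauto
  by_cases hcf : c ∈ f
  · rcases edgeAC f hfF haf hcf with h | h <;> tauto
  exfalso
  obtain ⟨x, hxf, hxa⟩ := Finset.exists_mem_ne
    (by rw [L.card_eq_three f hfF]; norm_num) a
  have hApath := L.link_connected a s x
    ⟨hsa'.symm, by obtain ⟨_, g, hg, h1, h2⟩ := hsa; exact ⟨g, hg, h2, h1⟩⟩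
    ⟨hxa.symm, f, hfF, haf, hxf⟩
  have key : ∀ y, Relation.ReflTransGen
      (fun p q => p ≠ q ∧ ({a, p, q} : Finset V) ∈ L.faces) s y →
      y = s ∨ y = b ∨ y = c := by
    intro y hy
    induction hy with
    | refl => exact Or.inl rfl
    | @tail p q hsp hpq ih =>
      obtain ⟨hpq', hface⟩ := hpq
      have hqa : q ≠ a := by
        intro hq'
        have h3 := L.card_eq_three _ hface
        rw [hq'] at h3
        have heq : ({a, p, a} : Finset V) = {a, p} := by
          ext u; simp only [Finset.mem_insert, Finset.mem_singleton]; tauto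
        rw [heq] at h3
        have h2 : ({a, p} : Finset V).card ≤ 2 :=
          le_trans (Finset.card_insert_le _ _) (by simp)
        omega
      rcases ih with hp | hp | hp
      · have hpm : s ∈ ({a, p, q} : Finset V) := by rw [← hp]; simp
        rcases faceS _ hface hpm with h | h | h <;>
          (have hq : q ∈ ({a, p, q} : Finset V) := by simp
           rw [h] at hq
           simp only [Finset.mem_insert, Finset.mem_singleton] at hq
           tauto)
      · have hpm : b ∈ ({a, p, q} : Finset V) := by rw [← hp]; simp
        rcases edgeAB _ hface (by simp) hpm with h | h <;>
          (have hq : q ∈ ({a, p, q} : Finset V) := by simp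
           rw [h] at hq
           simp only [Finset.mem_insert, Finset.mem_singleton] at hq
           tauto)
      · have hpm : c ∈ ({a, p, q} : Finset V) := by rw [← hp]; simp
        rcases edgeAC _ hface (by simp) hpm with h | h <;>
          (have hq : q ∈ ({a, p, q} : Finset V) := by simp
           rw [h] at hq
           simp only [Finset.mem_insert, Finset.mem_singleton] at hq
           tauto)
  rcases key x hApath with rfl | rfl | rfl
  · exact hs hxf
  · exact hbf hxf
  · exact hcf hxf

end MyAux

open S2Triangulation in
/-- Let `L` be a triangulation of `S²` and let `s` be a vertex of
valence 3 whose link has vertices `a, b, c`.  If `{a, b, c}` spans a 2-simplex of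
`L`, then `L` is the boundary of a 3-simplex: `L` has exactly the four vertices
`s, a, b, c`, and the 2-simplices of `L` are exactly the four 3-element subsets of
`{s, a, b, c}`. -/
theorem filled_link_gives_boundary_of_simplex {V : Type} [Fintype V] [DecidableEq V]
    (L : S2Triangulation V) (s a b c : V)
    (hab : a ≠ b) (hbc : b ≠ c) (hac : a ≠ c)
    (hlink : L.linkVerts s = {a, b, c})
    (hf : ({a, b, c} : Finset V) ∈ L.faces) :
    (∀ x : V, x = s ∨ x = a ∨ x = b ∨ x = c) ∧
    (∀ f : Finset V, f ∈ L.faces ↔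
      f = {s, a, b} ∨ f = {s, a, c} ∨ f = {s, b, c} ∨ f = {a, b, c}) := by
  have hlink2 : L.linkVerts s = {b, a, c} := by
    rw [hlink]; ext x
    simp only [Finset.mem_insert, Finset.mem_singleton]; tauto
  have hlink3 : L.linkVerts s = {c, a, b} := by
    rw [hlink]; ext x
    simp only [Finset.mem_insert, Finset.mem_singleton]; tauto
  have e2 : ({b, a, c} : Finset V) = {a, b, c} := by
    ext x; simp only [Finset.mem_insert, Finset.mem_singleton]; tauto
  have e5 : ({c, a, b} : Finset V) = {a, b, c} := by
    ext x; simp only [Finset.mem_insert, Finset.mem_singleton]; tauto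
  have e1 : ({s, b, a} : Finset V) = {s, a, b} := by
    ext x; simp only [Finset.mem_insert, Finset.mem_singleton]; tauto
  have e3 : ({s, c, a} : Finset V) = {s, a, c} := by
    ext x; simp only [Finset.mem_insert, Finset.mem_singleton]; tauto
  have e4 : ({s, c, b} : Finset V) = {s, b, c} := by
    ext x; simp only [Finset.mem_insert, Finset.mem_singleton]; tauto
  obtain ⟨⟨hfab, hfac, hfbc⟩, keyA⟩ := my_link_face_aux L s a b c hab hbc hac hlink hf
  obtain ⟨-, keyB⟩ := my_link_face_aux L s b a c hab.symm hac hbc hlink2 (e2 ▸ hf)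
  obtain ⟨-, keyC⟩ := my_link_face_aux L s c a b hac.symm hab hbc.symm hlink3 (e5 ▸ hf)
  have touch : ∀ f ∈ L.faces, (s ∈ f ∨ a ∈ f ∨ b ∈ f ∨ c ∈ f) →
      f = {s, a, b} ∨ f = {s, a, c} ∨ f = {s, b, c} ∨ f = {a, b, c} := by
    intro f hfF h
    rcases h with h | h | h | h
    · exact keyA f hfF (Or.inl h)
    · exact keyA f hfF (Or.inr h)
    · rcases keyB f hfF (Or.inr h) with h' | h' | h' | h'
      · rw [e1] at h'; tauto
      · tauto
      · tauto
      · rw [e2] at h'; tauto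
    · rcases keyC f hfF (Or.inr h) with h' | h' | h' | h'
      · rw [e3] at h'; tauto
      · rw [e4] at h'; tauto
      · tauto
      · rw [e5] at h'; tauto
  have allV : ∀ x : V, x = s ∨ x = a ∨ x = b ∨ x = c := by
    have main : ∀ y, Relation.ReflTransGen
        (fun p q : V => p ≠ q ∧ ∃ g ∈ L.faces, p ∈ g ∧ q ∈ g) s y →
        y = s ∨ y = a ∨ y = b ∨ y = c := by
      intro y hy
      induction hy with
      | refl => exact Or.inl rfl
      | @tail p q hsp hpq ih =>
        obtain ⟨hne, g, hg, hpg, hqg⟩ := hpq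
        have hmem : s ∈ g ∨ a ∈ g ∨ b ∈ g ∨ c ∈ g := by
          rcases ih with rfl | rfl | rfl | rfl <;> tauto
        rcases touch g hg hmem with rfl | rfl | rfl | rfl <;>
          (simp only [Finset.mem_insert, Finset.mem_singleton] at hqg; tauto)
    exact fun x => main x (L.conn s x)
  refine ⟨allV, fun f => ⟨fun hfF => ?_, fun h => ?_⟩⟩
  · obtain ⟨x, hx⟩ := Finset.card_pos.1 (by rw [L.card_eq_three f hfF]; norm_num)
    exact touch f hfF (by rcases allV x with rfl | rfl | rfl | rfl <;> tauto)
  · rcases h with rfl | rfl | rfl | rfl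
    · exact hfab
    · exact hfac
    · exact hfbc
    · exact hf
end
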